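/- Let G be a finite group acting on a finite set X with orbit decomposition X = Y_1 ⊔ … ⊔ Y_s, choose representatives x_i ∈ Y_i with stabilizers G_{x_i}, and let V be a permutation representation of G. For each i, let g_{i,1}, …, g_{i,t_i} be a transversal of G/G_{x_i} and define the reconstruction map θ_{x_i}^* : C_{G_{x_i}}(V, ℝ) → C_G(V, ℝ^X) by θ_{x_i}^*(f)(v) = Σ_{j=1}^{t_i} f(g_{i,j}^{-1} v) e_{g_{i,j} x_i}. Then C_G(V, ℝ^X) = θ_{x_1}^*(C_{G_{x_1}}(V, ℝ)) ⊕ … ⊕ θ_{x_s}^*(C_{G_{x_s}}(V, ℝ)); that is, every continuous G-equivariant map f : V → ℝ^X can be written uniquely as f = Σ_{i=1}^s θ_{x_i}^*(h_i) with h_i ∈ C_{G_{x_i}}(V, ℝ). -/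

import Mathlib

open scoped BigOperators

noncomputable section EquivUnivPreamble

/-- Point-wise activation: apply `σ` coordinatewise. -/
def act (σ : ℝ → ℝ) {Z : Type} (v : Z → ℝ) : Z → ℝ := fun z => σ (v z)

/-- The action of a group element `g` on a real-valued function `v : Y → ℝ` induced by a
`G`-action on `Y` (the permutation representation `ℝ^Y`): `(g • v) y = v (g⁻¹ • y)`. -/
def pSMul {G Y : Type} [Group G] [MulAction G Y] (g : G) (v : Y → ℝ) : Y → ℝ :=
  fun y => v (g⁻¹ • y)

/-- `G`-equivariance of a map between permutation representations. -/
def Equivariant (G : Type) [Group G] {Y Z : Type} [MulAction G Y] [MulAction G Z]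
    (f : (Y → ℝ) → (Z → ℝ)) : Prop :=
  ∀ (g : G) (v : Y → ℝ), f (pSMul g v) = pSMul g (f v)

/-- A map between permutation representations is affine. -/
def IsAffine {Y Z : Type} (f : (Y → ℝ) → (Z → ℝ)) : Prop :=
  ∃ (φ : (Y → ℝ) →ₗ[ℝ] (Z → ℝ)) (b : Z → ℝ), ∀ v, f v = φ v + b

/-- A layer space: the set of maps `v ↦ ∑ᵢ cᵢ φⁱ(v) + b` where `φ¹, …, φᵏ` are fixed
`G`-equivariant linear maps and the bias `b` ranges over all functions constant on
`G`-orbits (i.e. all `∑ⱼ yⱼ 1_{Xⱼ}` with `Xⱼ` the orbits). -/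
def IsLayerSpace (G : Type) [Group G] {Y Z : Type} [MulAction G Y] [MulAction G Z]
    (M : Set ((Y → ℝ) → (Z → ℝ))) : Prop :=
  ∃ (k : ℕ) (φ : Fin k → ((Y → ℝ) →ₗ[ℝ] (Z → ℝ))),
    (∀ i, Equivariant G (φ i : (Y → ℝ) → (Z → ℝ))) ∧
    M = { f | ∃ (c : Fin k → ℝ) (b : Z → ℝ),
            (∀ (g : G) (z : Z), b (g • z) = b z) ∧
            ∀ v, f v = (∑ i, c i • φ i v) + b }

/-- `M^{k×h}`: the layer space `M` with input multiplicity `k` and output multiplicity `h`,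
`(v₁,…,v_k) ↦ (∑ⱼ f_{1,j}(vⱼ), …, ∑ⱼ f_{h,j}(vⱼ))`, identifying `V ⊗ ℝᵏ` with
`Fin k × Y → ℝ`. -/
def layerPow {Y Z : Type} (M : Set ((Y → ℝ) → (Z → ℝ))) (k h : ℕ) :
    Set ((Fin k × Y → ℝ) → (Fin h × Z → ℝ)) :=
  { F | ∃ f : Fin h → Fin k → ((Y → ℝ) → (Z → ℝ)),
      (∀ i j, f i j ∈ M) ∧
      ∀ (v : Fin k × Y → ℝ) (p : Fin h × Z), F v p = ∑ j, f p.1 j (fun y => v (j, y)) p.2 }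

/-- `M^{1×h}` under the canonical identification `V ⊗ ℝ¹ ≅ V` of the input. -/
def layerPowIn {Y Z : Type} (M : Set ((Y → ℝ) → (Z → ℝ))) (h : ℕ) :
    Set ((Y → ℝ) → (Fin h × Z → ℝ)) :=
  { F | ∃ f : Fin h → ((Y → ℝ) → (Z → ℝ)), (∀ i, f i ∈ M) ∧
      ∀ (v : Y → ℝ) (p : Fin h × Z), F v p = f p.1 v p.2 }

/-- `M^{k×1}` under the canonical identification `W ⊗ ℝ¹ ≅ W` of the output. -/
def layerPowOut {Y Z : Type} (M : Set ((Y → ℝ) → (Z → ℝ))) (k : ℕ) :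
    Set ((Fin k × Y → ℝ) → (Z → ℝ)) :=
  { F | ∃ f : Fin k → ((Y → ℝ) → (Z → ℝ)), (∀ j, f j ∈ M) ∧
      ∀ (v : Fin k × Y → ℝ) (z : Z), F v z = ∑ j, f j (fun y => v (j, y)) z }

/-- Evaluation of a chain of `d+1` layers with the point-wise activation `σ` between
consecutive layers: `φ_d ∘ σ̃ ∘ ⋯ ∘ σ̃ ∘ φ_0`. -/
def chainEval (σ : ℝ → ℝ) : ∀ (d : ℕ) (Y : Fin (d + 2) → Type)
    (φ : ∀ i : Fin (d + 1), (Y i.castSucc → ℝ) → (Y i.succ → ℝ)),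
    (Y 0 → ℝ) → (Y (Fin.last (d + 1)) → ℝ)
  | 0, _, φ => φ 0
  | (d + 1), Y, φ => fun v =>
      φ (Fin.last (d + 1))
        (act σ (chainEval σ d (fun i : Fin (d + 2) => Y i.castSucc)
          (fun i : Fin (d + 1) => φ i.castSucc) v))

/-- The neural space `N(M₀, …, M_d)` of a chain of `d+1` layer spaces. -/
def NeuralSpace (σ : ℝ → ℝ) (d : ℕ) (Y : Fin (d + 2) → Type)
    (M : ∀ i : Fin (d + 1), Set ((Y i.castSucc → ℝ) → (Y i.succ → ℝ))) :
    Set ((Y 0 → ℝ) → (Y (Fin.last (d + 1)) → ℝ)) :=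
  { F | ∃ φ : ∀ i : Fin (d + 1), (Y i.castSucc → ℝ) → (Y i.succ → ℝ),
      (∀ i, φ i ∈ M i) ∧ F = chainEval σ d Y φ }

/-- All networks `N(M₀^{1×k₁}, M₁^{k₁×k₂}, …, M_d^{k_d×k})` for the chain `M₀,…,M_d`, with
arbitrary interior multiplicities and fixed output multiplicity `k` (union over the interior
multiplicities). -/
def WPre (σ : ℝ → ℝ) : ∀ (d : ℕ) (Y : Fin (d + 2) → Type)
    (M : ∀ i : Fin (d + 1), Set ((Y i.castSucc → ℝ) → (Y i.succ → ℝ))) (k : ℕ),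
    Set ((Y 0 → ℝ) → (Fin k × Y (Fin.last (d + 1)) → ℝ))
  | 0, _, M, k => layerPowIn (M 0) k
  | (d + 1), Y, M, k =>
      { F | ∃ (k' : ℕ) (g : (Y 0 → ℝ) → (Fin k' × Y (Fin.last (d + 1)).castSucc → ℝ)),
          g ∈ WPre σ d (fun i : Fin (d + 2) => Y i.castSucc)
                (fun i : Fin (d + 1) => M i.castSucc) k' ∧
          ∃ f ∈ layerPow (M (Fin.last (d + 1))) k' k,
          F = fun v => f (act σ (g v)) }

/-- The network space `N(M₀^{1×k}, M₁^{k×k}, …, M_d^{k×k})`: all multiplicities equal to `k`. -/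
def WFix (σ : ℝ → ℝ) : ∀ (d : ℕ) (Y : Fin (d + 2) → Type)
    (M : ∀ i : Fin (d + 1), Set ((Y i.castSucc → ℝ) → (Y i.succ → ℝ))) (k : ℕ),
    Set ((Y 0 → ℝ) → (Fin k × Y (Fin.last (d + 1)) → ℝ))
  | 0, _, M, k => layerPowIn (M 0) k
  | (d + 1), Y, M, k =>
      { F | ∃ g ∈ WFix σ d (fun i : Fin (d + 2) => Y i.castSucc)
                (fun i : Fin (d + 1) => M i.castSucc) k,
          ∃ f ∈ layerPow (M (Fin.last (d + 1))) k k,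
          F = fun v => f (act σ (g v)) }

/-- Closure in the topology of uniform convergence on compact sets. -/
def UnifClosure {A B : Type} [TopologicalSpace A] [PseudoMetricSpace B]
    (S : Set (A → B)) : Set (A → B) :=
  { F | ∀ K : Set A, IsCompact K → ∀ ε : ℝ, 0 < ε → ∃ g ∈ S, ∀ x ∈ K, dist (F x) (g x) < ε }

/-- Separation relation of a family of functions. -/
def sepRel {A B : Type} (S : Set (A → B)) : Set (A × A) :=
  { p | ∀ f ∈ S, f p.1 = f p.2 }

/-- Entry-wise separation relation at the output entry `z`. -/
def sepRelAt {A Z : Type} (S : Set (A → (Z → ℝ))) (z : Z) : Set (A × A) :=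
  { p | ∀ f ∈ S, f p.1 z = f p.2 z }

/-- `C_ρ(A, B)`: continuous functions respecting the relation `ρ`. -/
def Crho {A B : Type} [TopologicalSpace A] [TopologicalSpace B] (ρ : Set (A × A)) :
    Set (A → B) :=
  { f | Continuous f ∧ ∀ p ∈ ρ, f p.1 = f p.2 }

/-- `C_ρ̄(A, ℝ^Z)` for a family of entry-wise relations `ρ̄ = (ρ_z)_{z ∈ Z}`. -/
def CrhoEntryRel {A Z : Type} [TopologicalSpace A] (ρ : Z → Set (A × A)) :
    Set (A → (Z → ℝ)) :=
  { f | Continuous f ∧ ∀ (z : Z), ∀ p ∈ ρ z, f p.1 z = f p.2 z }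

/-- `σ` is not a polynomial function. -/
def NotPolynomial (σ : ℝ → ℝ) : Prop :=
  ¬ ∃ p : Polynomial ℝ, ∀ x : ℝ, σ x = Polynomial.eval x p

/-- `c+1` widened copies of the layer space `M ⊆ Aff_G(ℝ^Z, ℝ^Z)`, from input multiplicity
`kin` to output multiplicity `kout` (union over interior multiplicities). -/
def WRep (σ : ℝ → ℝ) {Z : Type} (M : Set ((Z → ℝ) → (Z → ℝ))) :
    ∀ (_c kin kout : ℕ), Set ((Fin kin × Z → ℝ) → (Fin kout × Z → ℝ))
  | 0, kin, kout => layerPow M kin kout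
  | (c + 1), kin, kout =>
      { F | ∃ k, ∃ g ∈ WRep σ M c kin k, ∃ f ∈ layerPow M k kout,
          F = fun v => f (act σ (g v)) }

/-- `c+1` widened copies of `M`, starting at input multiplicity `kin` and ending with
output multiplicity `1` (canonically identified with `ℝ^Z`). -/
def WRepOut (σ : ℝ → ℝ) {Z : Type} (M : Set ((Z → ℝ) → (Z → ℝ))) :
    ∀ (_c kin : ℕ), Set ((Fin kin × Z → ℝ) → (Z → ℝ))
  | 0, kin => layerPowOut M kin
  | (c + 1), kin =>
      { F | ∃ k, ∃ g ∈ WRep σ M c kin k, ∃ f ∈ layerPowOut M k,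
          F = fun v => f (act σ (g v)) }

/-- `c+1` widened copies of `M`, with input multiplicity `1` (identified with `ℝ^Z`) and
output multiplicity `k`. -/
def WRepIn (σ : ℝ → ℝ) {Z : Type} (M : Set ((Z → ℝ) → (Z → ℝ))) :
    ∀ (_c k : ℕ), Set ((Z → ℝ) → (Fin k × Z → ℝ))
  | 0, k => layerPowIn M k
  | (c + 1), k =>
      { F | ∃ k', ∃ g ∈ WRepIn σ M c k', ∃ f ∈ layerPow M k' k,
          F = fun v => f (act σ (g v)) }

/-- The universality class `U(M, …, M)` of `c+2` copies of a layer space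
`M ⊆ Aff_G(ℝ^Z, ℝ^Z)`. -/
def UClassRep (σ : ℝ → ℝ) {Z : Type} [Fintype Z] (M : Set ((Z → ℝ) → (Z → ℝ))) (c : ℕ) :
    Set ((Z → ℝ) → (Z → ℝ)) :=
  UnifClosure { F | ∃ k, ∃ g ∈ WRepIn σ M c k, ∃ f ∈ layerPowOut M k,
      F = fun v => f (act σ (g v)) }

/-- The universality class `U(M₀, …, M_d, M, …, M)` of the chain `M₀, …, M_d` followed by
`c+1` copies of `M`. -/
def UClassPreRep (σ : ℝ → ℝ) (d : ℕ) (Y : Fin (d + 2) → Type)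
    [Fintype (Y (Fin.last (d + 1)))]
    (Mpre : ∀ i : Fin (d + 1), Set ((Y i.castSucc → ℝ) → (Y i.succ → ℝ)))
    (M : Set ((Y (Fin.last (d + 1)) → ℝ) → (Y (Fin.last (d + 1)) → ℝ))) (c : ℕ) :
    Set ((Y 0 → ℝ) → (Y (Fin.last (d + 1)) → ℝ)) :=
  UnifClosure { F | ∃ k, ∃ g ∈ WPre σ d Y Mpre k, ∃ f ∈ WRepOut σ M c k,
      F = fun v => f (act σ (g v)) }

/-- The universality class `U(M₀, …, M_d, N)` of the chain `M₀, …, M_d` followed by one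
extra layer space `N`. -/
def UClassApp1 (σ : ℝ → ℝ) (d : ℕ) (Y : Fin (d + 2) → Type)
    (M : ∀ i : Fin (d + 1), Set ((Y i.castSucc → ℝ) → (Y i.succ → ℝ)))
    {Z : Type} [Fintype Z]
    (N : Set ((Y (Fin.last (d + 1)) → ℝ) → (Z → ℝ))) : Set ((Y 0 → ℝ) → (Z → ℝ)) :=
  UnifClosure { F | ∃ k, ∃ g ∈ WPre σ d Y M k, ∃ f ∈ layerPowOut N k,
      F = fun v => f (act σ (g v)) }

/-- The universality class `U(M₀, …, M_d, N₁, N₂)` of the chain `M₀, …, M_d` followed by two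
extra layer spaces `N₁, N₂`. -/
def UClassApp2 (σ : ℝ → ℝ) (d : ℕ) (Y : Fin (d + 2) → Type)
    (M : ∀ i : Fin (d + 1), Set ((Y i.castSucc → ℝ) → (Y i.succ → ℝ)))
    {Z₁ Z₂ : Type} [Fintype Z₂]
    (N₁ : Set ((Y (Fin.last (d + 1)) → ℝ) → (Z₁ → ℝ)))
    (N₂ : Set ((Z₁ → ℝ) → (Z₂ → ℝ))) : Set ((Y 0 → ℝ) → (Z₂ → ℝ)) :=
  UnifClosure { F | ∃ k₁, ∃ g ∈ WPre σ d Y M k₁, ∃ k₂, ∃ m ∈ layerPow N₁ k₁ k₂,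
      ∃ f ∈ layerPowOut N₂ k₂, F = fun v => f (act σ (m (act σ (g v)))) }

/-- The universality class `U(M₁, M₂, M₃)` of three layer spaces on a common space `ℝ^Z`. -/
def UClass3 (σ : ℝ → ℝ) {Z : Type} [Fintype Z] (M₁ M₂ M₃ : Set ((Z → ℝ) → (Z → ℝ))) :
    Set ((Z → ℝ) → (Z → ℝ)) :=
  UnifClosure { F | ∃ k₁ k₂, ∃ g ∈ layerPowIn M₁ k₁, ∃ m ∈ layerPow M₂ k₁ k₂,
      ∃ f ∈ layerPowOut M₃ k₂, F = fun v => f (act σ (m (act σ (g v)))) }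

/-- The invariant layer space `I = Aff_G(ℝ^Y, ℝ)`: all `G`-invariant affine maps, with `ℝ`
realized as the trivial permutation representation `ℝ^{Unit}`. -/
def InvAff (G : Type) [Group G] {Y : Type} [MulAction G Y] :
    Set ((Y → ℝ) → (Unit → ℝ)) :=
  { f | IsAffine f ∧ ∀ (g : G) (v : Y → ℝ), f (pSMul g v) = f v }

/-- The fully connected layer space `L = Aff(ℝ, ℝ)`, with `ℝ` realized as `ℝ^{Unit}`. -/
def Lfull : Set ((Unit → ℝ) → (Unit → ℝ)) :=
  { f | ∃ a b : ℝ, f = fun v _ => a * v () + b }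

/-- The width-1 convolutional layer space `C ⊆ Aff_G(ℝ^X, ℝ^X)`:
`v ↦ a·v + (bias constant on `G`-orbits)`, i.e. `v ↦ a·v + ∑ⱼ yⱼ 1_{Xⱼ}`. -/
def ConvG (G : Type) [Group G] {X : Type} [MulAction G X] : Set ((X → ℝ) → (X → ℝ)) :=
  { f | ∃ (a : ℝ) (b : X → ℝ), (∀ (g : G) (z : X), b (g • z) = b z) ∧
      f = fun v z => a * v z + b z }

/-- The width-1 convolutional layer space for `S_n` acting on `ℝ^n`:
`C = { v ↦ a·v + b𝟙 }`. -/
def ConvC (n : ℕ) : Set ((Fin n → ℝ) → (Fin n → ℝ)) :=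
  { f | ∃ a b : ℝ, f = fun v i => a * v i + b }

/-- The PointNet (DeepSets) layer space for `S_n` acting on `ℝ^n`:
`P = { v ↦ (a·Id + c·𝟙𝟙ᵀ) v + b𝟙 }`. -/
def PointNetP (n : ℕ) : Set ((Fin n → ℝ) → (Fin n → ℝ)) :=
  { f | ∃ a c b : ℝ, f = fun v i => a * v i + c * (∑ j, v j) + b }
end EquivUnivPreamble

/-!
The reconstruction of `h` from the representative `x` is the map
`θ_x^*(h)(v) = ∑ⱼ h(g_j⁻¹ v) e_{g_j x}`. If `h` is `G_x`-invariant, then `θ_x^*(h)(v)` vanishes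
off the orbit of `x` and takes the value `h(a⁻¹ v)` at `a x`, since exactly one transversal
element `g_j` lies in `a G_x`. Hence `∑ᵢ θ_{x_i}^*(h_i)(v)` at `a x_i` is `h_i(a⁻¹ v)`: taking
`a = 1` shows that the `h_i` are forced to be `v ↦ F(v)(x_i)`, and equivariance of `F` shows that
this choice works.
-/

open MulAction

section Reconstruction

variable {G X Y : Type} [Group G] [MulAction G X] [MulAction G Y]

theorem pSMul_one (v : Y → ℝ) : pSMul (1 : G) v = v := by
  funext y
  simp [pSMul]

theorem pSMul_pSMul (a b : G) (v : Y → ℝ) : pSMul a (pSMul b v) = pSMul (a * b) v := by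
  funext y
  simp [pSMul, mul_smul]

theorem Equivariant.apply_pSMul {F : (Y → ℝ) → (X → ℝ)} (hF : Equivariant G F) (a : G)
    (v : Y → ℝ) (z : X) : F (pSMul a v) z = F v (a⁻¹ • z) :=
  congrFun (hF a v) z

variable [DecidableEq X]

def reconstruction (x : X) {t : ℕ} (g : Fin t → G) (h : (Y → ℝ) → ℝ) (v : Y → ℝ) (z : X) : ℝ :=
  ∑ j, if g j • x = z then h (pSMul (g j)⁻¹ v) else 0

theorem reconstruction_apply_of_notMem_orbit {x z : X} (hz : z ∉ orbit G x) {t : ℕ}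
    (g : Fin t → G) (h : (Y → ℝ) → ℝ) (v : Y → ℝ) : reconstruction x g h v z = 0 :=
  Finset.sum_eq_zero fun j _ => if_neg fun hj => hz ⟨g j, hj⟩

theorem reconstruction_apply_smul {x : X} {t : ℕ} {g : Fin t → G}
    (hg : ∀ a : G, ∃! j, (g j)⁻¹ * a ∈ stabilizer G x) {h : (Y → ℝ) → ℝ}
    (hh : ∀ γ ∈ stabilizer G x, ∀ v, h (pSMul γ v) = h v) (a : G) (v : Y → ℝ) :
    reconstruction x g h v (a • x) = h (pSMul a⁻¹ v) := by
  obtain ⟨j₀, hj₀, huniq⟩ := hg a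
  have hhit : ∀ j, g j • x = a • x ↔ (g j)⁻¹ * a ∈ stabilizer G x := fun j => by
    rw [mem_stabilizer_iff, mul_smul, inv_smul_eq_iff, eq_comm]
  rw [reconstruction, Finset.sum_eq_single j₀
    (fun j _ hj => if_neg fun hjx => hj (huniq j ((hhit j).1 hjx))) (by simp),
    if_pos ((hhit j₀).2 hj₀)]
  calc h (pSMul (g j₀)⁻¹ v) = h (pSMul ((g j₀)⁻¹ * a)⁻¹ (pSMul (g j₀)⁻¹ v)) :=
        (hh _ (inv_mem hj₀) _).symm
    _ = h (pSMul a⁻¹ v) := by rw [pSMul_pSMul, mul_inv_rev, inv_inv, mul_inv_cancel_right]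

theorem sum_reconstruction_apply_smul {s : ℕ} {x : Fin s → X}
    (horb : ∀ z : X, ∃! i, z ∈ orbit G (x i)) {t : Fin s → ℕ} {g : ∀ i, Fin (t i) → G}
    (hg : ∀ i (a : G), ∃! j, (g i j)⁻¹ * a ∈ stabilizer G (x i)) {h : Fin s → (Y → ℝ) → ℝ}
    (hh : ∀ i, ∀ γ ∈ stabilizer G (x i), ∀ v, h i (pSMul γ v) = h i v)
    (i₀ : Fin s) (a : G) (v : Y → ℝ) :
    ∑ i, reconstruction (x i) (g i) (h i) v (a • x i₀) = h i₀ (pSMul a⁻¹ v) := by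
  rw [Finset.sum_eq_single i₀ (fun i _ hi => reconstruction_apply_of_notMem_orbit
    (fun hmem => hi ((horb _).unique hmem ⟨a, rfl⟩)) _ _ _) (by simp)]
  exact reconstruction_apply_smul (hg i₀) (hh i₀) a v

end Reconstruction

theorem equivariant_decomposition_via_reconstruction_general
    {G : Type} [Group G]
    {X : Type} [MulAction G X] [DecidableEq X]
    {Y : Type} [MulAction G Y]
    (s : ℕ) (x : Fin s → X)
    (horb : ∀ z : X, ∃! i : Fin s, z ∈ MulAction.orbit G (x i))
    (t : Fin s → ℕ) (g : ∀ i : Fin s, Fin (t i) → G)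
    (hg : ∀ (i : Fin s) (a : G),
      ∃! j : Fin (t i), (g i j)⁻¹ * a ∈ MulAction.stabilizer G (x i))
    (F : (Y → ℝ) → (X → ℝ)) (hFc : Continuous F) (hFe : Equivariant G F) :
    ∃! h : Fin s → ((Y → ℝ) → ℝ),
      (∀ i, Continuous (h i) ∧
        ∀ γ ∈ MulAction.stabilizer G (x i), ∀ v, h i (pSMul γ v) = h i v) ∧
      ∀ (v : Y → ℝ) (z : X),
        F v z = ∑ i, ∑ j, (if g i j • x i = z then h i (pSMul (g i j)⁻¹ v) else 0) := by
  have hinv : ∀ i, ∀ γ ∈ stabilizer G (x i), ∀ v, F (pSMul γ v) (x i) = F v (x i) :=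
    fun i γ hγ v => by rw [hFe.apply_pSMul, inv_smul_eq_iff.2 hγ.symm]
  refine ⟨fun i v => F v (x i), ⟨fun i => ⟨(continuous_apply _).comp hFc, hinv i⟩, fun v z => ?_⟩,
    fun h ⟨hh, hdecomp⟩ => funext fun i => funext fun v => ?_⟩
  · obtain ⟨i₀, ⟨a, rfl⟩, -⟩ := horb z
    have hsum := sum_reconstruction_apply_smul horb hg (h := fun i v => F v (x i)) hinv i₀ a v
    rw [hFe.apply_pSMul, inv_inv] at hsum
    exact hsum.symm
  · have hsum := sum_reconstruction_apply_smul horb hg (fun i => (hh i).2) i 1 v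
    rw [one_smul, inv_one, pSMul_one] at hsum
    exact hsum.symm.trans (hdecomp v (x i)).symm

/-- Equation `eq:equiv-decomposition`: with orbit representatives
`x₀, …, x_{s-1}` of the `G`-orbits of `X` and transversals `g i` of `G/G_{x_i}`, every
continuous `G`-equivariant map `F : V → ℝ^X` is uniquely of the form
`F = ∑ᵢ θ_{x_i}^*(h_i)` with `h_i ∈ C_{G_{x_i}}(V, ℝ)`, i.e.
`C_G(V, ℝ^X) = θ_{x_1}^*(C_{G_{x_1}}(V, ℝ)) ⊕ ⋯ ⊕ θ_{x_s}^*(C_{G_{x_s}}(V, ℝ))`. -/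
theorem equivariant_decomposition_via_reconstruction
    {G : Type} [Group G] [Fintype G]
    {X : Type} [Fintype X] [MulAction G X] [DecidableEq X]
    {Y : Type} [Fintype Y] [MulAction G Y]
    (s : ℕ) (x : Fin s → X)
    (horb : ∀ z : X, ∃! i : Fin s, z ∈ MulAction.orbit G (x i))
    (t : Fin s → ℕ) (g : ∀ i : Fin s, Fin (t i) → G)
    (hg : ∀ (i : Fin s) (a : G),
      ∃! j : Fin (t i), (g i j)⁻¹ * a ∈ MulAction.stabilizer G (x i))
    (F : (Y → ℝ) → (X → ℝ)) (hFc : Continuous F) (hFe : Equivariant G F) :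
    ∃! h : Fin s → ((Y → ℝ) → ℝ),
      (∀ i, Continuous (h i) ∧
        ∀ γ ∈ MulAction.stabilizer G (x i), ∀ v, h i (pSMul γ v) = h i v) ∧
      ∀ (v : Y → ℝ) (z : X),
        F v z = ∑ i, ∑ j, (if g i j • x i = z then h i (pSMul (g i j)⁻¹ v) else 0) :=
  equivariant_decomposition_via_reconstruction_general s x horb t g hg F hFc hFe
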